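/- arXiv:math/0407166 — 2 statements merged into one kernel-verified Lean document; each statement's English description precedes it below -/
import Mathlib

section
/- Define a_n = (2^n - 1)·|2^n - 1|_3 (a positive integer) and b_n = 2^n - 1. Then for every positive integer n, Σ_{d|n} μ(n/d)·a_d ≤ Σ_{d|n} μ(n/d)·b_d. -/
/-!
The summand differences are `μ(n/d) · c_d` with `c_d = (2^d - 1)(1 - |2^d - 1|_3) ∈ [0, 2^d)`.
Since `3 ∣ 2^d - 1` exactly when `d` is even, `c_d = 0` for odd `d`, so for odd `n` the two sums
agree. For `n = 2k` the term `d = n` contributes `c_n ≥ (2/3)(4^k - 1)`, while the proper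
divisors are at most `k` and contribute at least `-∑_{d=1}^{k} 2^d = -(2^(k+1) - 2)`.
-/

open Finset ArithmeticFunction
open scoped ArithmeticFunction.Moebius

theorem Nat.two_mul_le_of_mem_properDivisors {n d : ℕ} (hd : d ∈ n.properDivisors) :
    2 * d ≤ n := by
  obtain ⟨⟨q, rfl⟩, hlt⟩ := Nat.mem_properDivisors.1 hd
  rcases q with _ | _ | q
  · simp at hlt
  · simp at hlt
  · nlinarith

theorem Nat.sum_divisors_moebius_mul_ge {R : Type*} [Ring R] [LinearOrder R]
    [IsStrictOrderedRing R] {n : ℕ} (hn : n ≠ 0) {f g : ℕ → R}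
    (hfg : ∀ d ∈ n.properDivisors, |f d| ≤ g d) :
    f n - ∑ d ∈ n.properDivisors, g d ≤ ∑ d ∈ n.divisors, (μ (n / d) : R) * f d := by
  rw [← Nat.cons_self_properDivisors hn, sum_cons, Nat.div_self (Nat.pos_of_ne_zero hn),
    moebius_apply_one, Int.cast_one, one_mul, sub_eq_add_neg, ← sum_neg_distrib]
  gcongr with d hd
  calc -g d ≤ -|(μ (n / d) : R) * f d| := by
        rw [neg_le_neg_iff, abs_mul]
        refine (mul_le_of_le_one_left (abs_nonneg _) ?_).trans (hfg d hd)
        exact_mod_cast abs_moebius_le_one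
    _ ≤ _ := neg_abs_le _

theorem sum_two_pow_properDivisors_le (k : ℕ) :
    ∑ d ∈ (k + k).properDivisors, (2 : ℚ) ^ d ≤ 2 ^ (k + 1) - 2 := by
  have hsub : (k + k).properDivisors ⊆ Ico 1 (k + 1) := fun d hd ↦ by
    have := Nat.two_mul_le_of_mem_properDivisors hd
    have := Nat.pos_of_mem_properDivisors hd
    rw [mem_Ico]; omega
  calc ∑ d ∈ (k + k).properDivisors, (2 : ℚ) ^ d ≤ ∑ d ∈ Ico 1 (k + 1), (2 : ℚ) ^ d :=
        sum_le_sum_of_subset_of_nonneg hsub fun _ _ _ ↦ by positivity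
    _ = 2 ^ (k + 1) - 2 := by rw [geom_sum_Ico (by norm_num) (by omega)]; norm_num

theorem three_dvd_two_pow_sub_one_iff (d : ℕ) : (3 : ℤ) ∣ 2 ^ d - 1 ↔ Even d := by
  rw [show (3 : ℤ) = (3 : ℕ) from rfl, ← ZMod.intCast_zmod_eq_zero_iff_dvd, Int.cast_sub, sub_eq_zero, Int.cast_pow,
    Int.cast_ofNat, Int.cast_one, show (2 : ZMod 3) = -1 from rfl,
    neg_one_pow_eq_one_iff_even (by decide)]

theorem padicNorm_two_pow_sub_one_eq_intCast (p d : ℕ) :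
    padicNorm p ((2 : ℚ) ^ d - 1) = padicNorm p ((2 ^ d - 1 : ℤ) : ℚ) := by
  push_cast; rfl

theorem padicNorm_three_two_pow_sub_one_of_odd {d : ℕ} (hd : Odd d) :
    padicNorm 3 ((2 : ℚ) ^ d - 1) = 1 := by
  rw [padicNorm_two_pow_sub_one_eq_intCast, padicNorm.int_eq_one_iff, Nat.cast_ofNat,
    three_dvd_two_pow_sub_one_iff, Nat.not_even_iff_odd]
  exact hd

theorem padicNorm_three_two_pow_sub_one_le_of_even {d : ℕ} (hd : Even d) :
    padicNorm 3 ((2 : ℚ) ^ d - 1) ≤ 3⁻¹ := by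
  have h := (padicNorm.dvd_iff_norm_le (p := 3) (n := 1)).1
    (by simpa using (three_dvd_two_pow_sub_one_iff d).2 hd)
  simpa [padicNorm_two_pow_sub_one_eq_intCast] using h

theorem abs_two_pow_sub_one_mul_one_sub_padicNorm_le (p d : ℕ) [Fact p.Prime] :
    |((2 : ℚ) ^ d - 1) * (1 - padicNorm p ((2 : ℚ) ^ d - 1))| ≤ 2 ^ d := by
  have h1 : (1 : ℚ) ≤ 2 ^ d := one_le_pow₀ (by norm_num)
  have hN0 := padicNorm.nonneg (p := p) ((2 : ℚ) ^ d - 1)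
  have hN1 : padicNorm p ((2 : ℚ) ^ d - 1) ≤ 1 := by
    rw [padicNorm_two_pow_sub_one_eq_intCast]; exact padicNorm.of_int _
  rw [abs_of_nonneg (by nlinarith)]
  nlinarith

theorem least_period_count_le (n : ℕ) (hn : 0 < n) :
    ∑ d ∈ n.divisors, (ArithmeticFunction.moebius (n / d) : ℚ) *
        (((2 : ℚ) ^ d - 1) * padicNorm 3 ((2 : ℚ) ^ d - 1)) ≤
    ∑ d ∈ n.divisors, (ArithmeticFunction.moebius (n / d) : ℚ) * ((2 : ℚ) ^ d - 1) := by
  have : Fact (Nat.Prime 3) := ⟨Nat.prime_three⟩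
  set c : ℕ → ℚ := fun d ↦ ((2 : ℚ) ^ d - 1) * (1 - padicNorm 3 ((2 : ℚ) ^ d - 1)) with hc
  suffices 0 ≤ ∑ d ∈ n.divisors, (μ (n / d) : ℚ) * c d by
    rw [← sub_nonneg, ← sum_sub_distrib]
    simpa only [hc, ← mul_sub, mul_one_sub] using this
  rcases Nat.even_or_odd n with ⟨k, rfl⟩ | hodd
  · have htop : 2 / 3 * ((2 : ℚ) ^ (k + k) - 1) ≤ c (k + k) := by
      have hN := padicNorm_three_two_pow_sub_one_le_of_even (d := k + k) ⟨k, rfl⟩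
      have h1 : (1 : ℚ) ≤ 2 ^ (k + k) := one_le_pow₀ (by norm_num)
      simp only [hc]; nlinarith
    have h2k : (2 : ℚ) ≤ 2 ^ k := le_self_pow₀ (by norm_num) (by omega : k ≠ 0)
    calc (0 : ℚ) ≤ c (k + k) - (2 ^ (k + 1) - 2) := by
          -- with `x = 2^k`: `(2/3)(x^2 - 1) - (2x - 2) = (2/3)(x - 1)(x - 2)`
          rw [pow_add] at htop; rw [pow_succ]; nlinarith
      _ ≤ c (k + k) - ∑ d ∈ (k + k).properDivisors, (2 : ℚ) ^ d := by
          gcongr; exact sum_two_pow_properDivisors_le k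
      _ ≤ _ := Nat.sum_divisors_moebius_mul_ge hn.ne' fun d _ ↦
          abs_two_pow_sub_one_mul_one_sub_padicNorm_le 3 d
  · refine (sum_eq_zero fun d hd ↦ ?_).ge
    have hd_odd : Odd d := hodd.of_dvd_nat (Nat.dvd_of_mem_divisors hd)
    simp only [hc, padicNorm_three_two_pow_sub_one_of_odd hd_odd, sub_self, mul_zero]
end

section
/- With π_f(X) = Σ_{n≤X} O_f(n) where O_f(n) = (1/n)Σ_{d|n} μ(n/d)(2^d-1)|2^d-1|_3, one has limsup_{X→∞} X·π_f(X)/2^{X+1} ≤ 1 and liminf_{X→∞} X·π_f(X)/2^{X+1} ≥ 1/3. -/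
/-!
Write `F(d) = (2^d - 1)|2^d - 1|_3` (`fixCount d`), so that `n O_f(n) = Σ_{d ∣ n} μ(n/d) F(d)`.
As `0 ≤ F(d) ≤ 2^d`, the proper divisors move `n O_f(n)` away from `F(n)` by less than
`Σ_{d ≤ n/2} 2^d < 2^(n/2+1)`, which adds only `O(X^2 2^(X/2)) = o(2^X)` to `X π_f(X)`.
Upper bound: `F(n) ≤ 2^n` and `X Σ_{n ≤ X} 2^n/n ≤ 2^(X+1) (1 + 2/X)` (the prime orbit theorem
for the doubling map, with an explicit error).
Lower bound: `F(n) ≥ 0`, `F(n) = 2^n - 1` for odd `n` (as `3 ∤ 2^n - 1`) and `X/n ≥ 1`, so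
`X π_f(X) ≥ Σ_{odd n ≤ X} (2^n - 1) - o(2^X) ≥ (2/3) 2^X - o(2^X)`.
-/

open Filter Topology Finset ArithmeticFunction
open scoped ArithmeticFunction.Moebius

lemma properDivisors_subset_range_half_succ (n : ℕ) : n.properDivisors ⊆ range (n / 2 + 1) := by
  intro d hd
  obtain ⟨⟨k, rfl⟩, hlt⟩ := Nat.mem_properDivisors.1 hd
  have hk : 2 ≤ k := by
    rcases k with _ | _ | k <;> simp_all
  rw [mem_range, Nat.lt_succ_iff, Nat.le_div_iff_mul_le two_pos]
  nlinarith

lemma sum_range_two_pow {K : Type*} [Ring K] (m : ℕ) :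
    ∑ d ∈ range m, (2 : K) ^ d = 2 ^ m - 1 := by
  rw [← geom_sum_mul (2 : K) m]; norm_num

lemma abs_sum_moebius_mul_sub_le {K : Type*} [Ring K] [LinearOrder K] [IsStrictOrderedRing K]
    {f : ℕ → K} (hf : ∀ d, |f d| ≤ 2 ^ d) (n : ℕ) :
    |∑ d ∈ n.divisors, (μ (n / d) : K) * f d - f n| ≤ 2 ^ (n / 2 + 1) := by
  rcases eq_or_ne n 0 with rfl | hn
  · simpa using (hf 0).trans (by norm_num)
  rw [← Nat.cons_self_properDivisors hn, sum_cons, Nat.div_self (Nat.pos_of_ne_zero hn),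
    moebius_apply_one, Int.cast_one, one_mul, add_sub_cancel_left]
  calc |∑ d ∈ n.properDivisors, (μ (n / d) : K) * f d|
      ≤ ∑ d ∈ n.properDivisors, |(μ (n / d) : K) * f d| := abs_sum_le_sum_abs _ _
    _ ≤ ∑ d ∈ n.properDivisors, (2 : K) ^ d := by
      refine sum_le_sum fun d _ => ?_
      rw [abs_mul]
      refine (mul_le_of_le_one_left (abs_nonneg _) ?_).trans (hf d)
      exact_mod_cast abs_moebius_le_one
    _ ≤ ∑ d ∈ range (n / 2 + 1), (2 : K) ^ d :=
      sum_le_sum_of_subset_of_nonneg (properDivisors_subset_range_half_succ n)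
        fun _ _ _ => by positivity
    _ ≤ 2 ^ (n / 2 + 1) := by rw [sum_range_two_pow]; exact sub_le_self _ zero_le_one

lemma limsup_le_and_le_liminf_of_squeeze {α β : Type*} [ConditionallyCompleteLinearOrder β]
    [TopologicalSpace β] [OrderTopology β] {l : Filter α} [l.NeBot] {u v w : α → β} {a b : β}
    (hw : Tendsto w l (𝓝 a)) (hv : Tendsto v l (𝓝 b)) (hwu : w ≤ᶠ[l] u) (huv : u ≤ᶠ[l] v) :
    limsup u l ≤ b ∧ a ≤ liminf u l := by
  have hu_below : l.IsBoundedUnder (· ≥ ·) u := hw.isBoundedUnder_ge.mono_ge hwu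
  have hu_above : l.IsBoundedUnder (· ≤ ·) u := hv.isBoundedUnder_le.mono_le huv
  constructor
  · rw [← hv.limsup_eq]
    exact limsup_le_limsup huv hu_below.isCoboundedUnder_le hv.isBoundedUnder_le
  · rw [← hw.liminf_eq]
    exact liminf_le_liminf hwu hw.isBoundedUnder_ge hu_above.isCoboundedUnder_ge

lemma tendsto_sq_mul_two_pow_half_div_two_pow :
    Tendsto (fun X : ℕ => (X : ℝ) ^ 2 * 2 ^ (X / 2) / 2 ^ X) atTop (𝓝 0) := by
  refine squeeze_zero (fun X => by positivity) (fun X => ?_)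
    (tendsto_pow_const_div_const_pow_of_one_lt 2 Real.one_lt_sqrt_two)
  have hsq : √2 ^ 2 = 2 := Real.sq_sqrt zero_le_two
  have hhalf : (2 : ℝ) ^ (X / 2) ≤ √2 ^ X :=
    calc (2 : ℝ) ^ (X / 2) = √2 ^ (2 * (X / 2)) := by rw [pow_mul, hsq]
      _ ≤ √2 ^ X := pow_le_pow_right₀ Real.one_lt_sqrt_two.le (Nat.mul_div_le X 2)
  have hpos : (0 : ℝ) < √2 ^ X := by positivity
  calc (X : ℝ) ^ 2 * 2 ^ (X / 2) / 2 ^ X ≤ X ^ 2 * √2 ^ X / (√2 ^ X * √2 ^ X) := by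
        rw [← mul_pow, ← sq, hsq]; gcongr
    _ = X ^ 2 / √2 ^ X := by field_simp

lemma sq_mul_sum_two_pow_div_le {X : ℕ} (hX : 6 ≤ X) :
    (X : ℚ) ^ 2 * ∑ n ∈ Icc 1 X, (2 : ℚ) ^ n / n ≤ (2 * X + 4) * 2 ^ X := by
  induction X, hX using Nat.le_induction with
  | base => norm_num [sum_Icc_succ_top]
  | succ X hX ih =>
    set S := ∑ n ∈ Icc 1 X, (2 : ℚ) ^ n / n
    have hX6 : (6 : ℚ) ≤ X := by exact_mod_cast hX
    have hP : (0 : ℚ) < 2 ^ X := by positivity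
    have hS : ((X : ℚ) + 1) ^ 2 * S ≤ 2 * (X + 5) * 2 ^ X := by
      have hpoly : ((X : ℚ) + 1) ^ 2 * (2 * X + 4) ≤ X ^ 2 * (2 * (X + 5)) := by nlinarith
      refine le_of_mul_le_mul_left ?_ (by positivity : (0 : ℚ) < X ^ 2)
      calc (X : ℚ) ^ 2 * ((X + 1) ^ 2 * S) = ((X : ℚ) + 1) ^ 2 * (X ^ 2 * S) := by ring
        _ ≤ ((X : ℚ) + 1) ^ 2 * ((2 * X + 4) * 2 ^ X) := by gcongr
        _ ≤ (X : ℚ) ^ 2 * (2 * (X + 5) * 2 ^ X) := by nlinarith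
    rw [sum_Icc_succ_top (by omega)]
    push_cast
    calc ((X : ℚ) + 1) ^ 2 * (S + 2 ^ (X + 1) / (X + 1))
        = (X + 1) ^ 2 * S + (X + 1) * 2 ^ (X + 1) := by field_simp
      _ ≤ (2 * ((X : ℚ) + 1) + 4) * 2 ^ (X + 1) := by rw [pow_succ (2 : ℚ) X]; nlinarith

noncomputable def fixCount (d : ℕ) : ℚ := (2 ^ d - 1) * padicNorm 3 (2 ^ d - 1)

lemma two_pow_sub_one_eq_intCast (d : ℕ) : (2 : ℚ) ^ d - 1 = ((2 ^ d - 1 : ℤ) : ℚ) := by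
  push_cast; rfl

lemma fixCount_nonneg (d : ℕ) : 0 ≤ fixCount d :=
  mul_nonneg (sub_nonneg.2 (one_le_pow₀ one_le_two)) (padicNorm.nonneg _)

lemma fixCount_le (d : ℕ) : fixCount d ≤ 2 ^ d := by
  have hnorm : padicNorm 3 ((2 : ℚ) ^ d - 1) ≤ 1 := by
    rw [two_pow_sub_one_eq_intCast]; exact padicNorm.of_int _
  calc fixCount d ≤ (2 ^ d - 1) * 1 :=
        mul_le_mul_of_nonneg_left hnorm (sub_nonneg.2 (one_le_pow₀ one_le_two))
    _ ≤ 2 ^ d := by linarith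

lemma fixCount_of_odd {d : ℕ} (hd : Odd d) : fixCount d = 2 ^ d - 1 := by
  have hndvd : ¬ (3 : ℤ) ∣ 2 ^ d - 1 := by
    obtain ⟨k, rfl⟩ := hd
    intro h
    have h3 := (ZMod.intCast_zmod_eq_zero_iff_dvd _ 3).2 h
    push_cast at h3
    rw [pow_succ, pow_mul, show (2 : ZMod 3) ^ 2 = 1 by decide, one_pow] at h3
    revert h3; decide
  rw [fixCount, two_pow_sub_one_eq_intCast, (padicNorm.int_eq_one_iff _).2 hndvd, mul_one]

lemma le_sum_fixCount (X : ℕ) : (2 / 3) * (2 ^ X - 1) - X ≤ ∑ n ∈ Icc 1 X, fixCount n := by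
  set K := (X + 1) / 2
  have hsub : (range K).image (fun k => 2 * k + 1) ⊆ Icc 1 X := by
    intro n hn
    simp only [mem_image, mem_range] at hn
    obtain ⟨k, hk, rfl⟩ := hn
    simp only [mem_Icc]; omega
  have hodd : ∑ n ∈ (range K).image (fun k => 2 * k + 1), fixCount n
      = (2 / 3 : ℚ) * (4 ^ K - 1) - K := by
    rw [sum_image (by intro a _ b _ h; simp only at h; omega)]
    have hgeom : ∑ k ∈ range K, (4 : ℚ) ^ k = (4 ^ K - 1) / 3 := by
      rw [geom_sum_eq (by norm_num)]; norm_num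
    rw [sum_congr rfl fun k _ => fixCount_of_odd (odd_two_mul_add_one k), sum_sub_distrib]
    simp only [pow_succ, pow_mul, show (2 : ℚ) ^ 2 = 4 by norm_num, ← sum_mul, hgeom,
      sum_const, card_range, nsmul_eq_mul, mul_one]
    ring
  have h4 : (2 : ℚ) ^ X ≤ 4 ^ K := by
    rw [show (4 : ℚ) = 2 ^ 2 by norm_num, ← pow_mul]
    exact pow_le_pow_right₀ one_le_two (by omega)
  have hK : (K : ℚ) ≤ X := by exact_mod_cast (by omega : K ≤ X)
  calc (2 / 3 : ℚ) * (2 ^ X - 1) - X ≤ (2 / 3) * (4 ^ K - 1) - K := by linarith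
    _ = ∑ n ∈ (range K).image (fun k => 2 * k + 1), fixCount n := hodd.symm
    _ ≤ ∑ n ∈ Icc 1 X, fixCount n :=
      sum_le_sum_of_subset_of_nonneg hsub fun n _ _ => fixCount_nonneg n

noncomputable def primitiveCount (n : ℕ) : ℚ :=
  ∑ d ∈ n.divisors, (μ (n / d) : ℚ) * fixCount d

noncomputable def orbitCount (n : ℕ) : ℚ := 1 / n * primitiveCount n

noncomputable def primeOrbitCount (X : ℕ) : ℚ := ∑ n ∈ Icc 1 X, orbitCount n

lemma abs_primitiveCount_sub_fixCount_le (n : ℕ) :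
    |primitiveCount n - fixCount n| ≤ 2 ^ (n / 2 + 1) :=
  abs_sum_moebius_mul_sub_le
    (fun d => (abs_of_nonneg (fixCount_nonneg d)).trans_le (fixCount_le d)) n

lemma mul_orbitCount_le {n X : ℕ} (hn : n ∈ Icc 1 X) :
    X * orbitCount n ≤ X * (2 ^ n / n) + X * 2 ^ (X / 2 + 1) := by
  obtain ⟨hn1, hnX⟩ := mem_Icc.1 hn
  have hP : primitiveCount n ≤ 2 ^ n + 2 ^ (X / 2 + 1) := by
    have := (abs_le.1 (abs_primitiveCount_sub_fixCount_le n)).2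
    have := fixCount_le n
    have : (2 : ℚ) ^ (n / 2 + 1) ≤ 2 ^ (X / 2 + 1) := pow_le_pow_right₀ one_le_two (by gcongr)
    linarith
  calc X * orbitCount n = X / n * primitiveCount n := by rw [orbitCount]; ring
    _ ≤ X / n * (2 ^ n + 2 ^ (X / 2 + 1)) := by gcongr
    _ = X * (2 ^ n / n) + X / n * 2 ^ (X / 2 + 1) := by ring
    _ ≤ X * (2 ^ n / n) + X * 2 ^ (X / 2 + 1) := by
      gcongr; exact div_le_self (by positivity) (by exact_mod_cast hn1)

lemma fixCount_sub_le_mul_orbitCount {n X : ℕ} (hn : n ∈ Icc 1 X) :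
    fixCount n - X * 2 ^ (X / 2 + 1) ≤ X * orbitCount n := by
  obtain ⟨hn1, hnX⟩ := mem_Icc.1 hn
  have hP : fixCount n - 2 ^ (X / 2 + 1) ≤ primitiveCount n := by
    have := (abs_le.1 (abs_primitiveCount_sub_fixCount_le n)).1
    have : (2 : ℚ) ^ (n / 2 + 1) ≤ 2 ^ (X / 2 + 1) := pow_le_pow_right₀ one_le_two (by gcongr)
    linarith
  have hn0 : (0 : ℚ) < n := by exact_mod_cast hn1
  have hq1 : (1 : ℚ) ≤ X / n := (one_le_div hn0).2 (by exact_mod_cast hnX)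
  have hqX : (X : ℚ) / n ≤ X := div_le_self (by positivity) (by exact_mod_cast hn1)
  calc fixCount n - X * 2 ^ (X / 2 + 1) ≤ X / n * fixCount n - X / n * 2 ^ (X / 2 + 1) := by
        gcongr
        · exact le_mul_of_one_le_left (fixCount_nonneg n) hq1
    _ = X / n * (fixCount n - 2 ^ (X / 2 + 1)) := by ring
    _ ≤ X / n * primitiveCount n := by gcongr
    _ = X * orbitCount n := by rw [orbitCount]; ring

lemma mul_primeOrbitCount_le {X : ℕ} (hX : 6 ≤ X) :
    X * primeOrbitCount X ≤ (2 + 4 / X) * 2 ^ X + 2 * X ^ 2 * 2 ^ (X / 2) := by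
  have hsum : X * primeOrbitCount X ≤
      X * ∑ n ∈ Icc 1 X, (2 : ℚ) ^ n / n + X ^ 2 * 2 ^ (X / 2 + 1) := by
    calc X * primeOrbitCount X = ∑ n ∈ Icc 1 X, X * orbitCount n := mul_sum _ _ _
      _ ≤ ∑ n ∈ Icc 1 X, ((X : ℚ) * (2 ^ n / n) + X * 2 ^ (X / 2 + 1)) :=
        sum_le_sum fun n hn => mul_orbitCount_le hn
      _ = X * ∑ n ∈ Icc 1 X, (2 : ℚ) ^ n / n + X ^ 2 * 2 ^ (X / 2 + 1) := by
        rw [sum_add_distrib, ← mul_sum, sum_const, Nat.card_Icc, nsmul_eq_mul]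
        push_cast
        ring
  have hXpos : (0 : ℚ) < X := by positivity
  have hS : (X : ℚ) * ∑ n ∈ Icc 1 X, (2 : ℚ) ^ n / n ≤ (2 + 4 / X) * 2 ^ X := by
    have := sq_mul_sum_two_pow_div_le hX
    rw [← mul_le_mul_iff_of_pos_left hXpos]
    calc (X : ℚ) * (X * ∑ n ∈ Icc 1 X, (2 : ℚ) ^ n / n)
        = X ^ 2 * ∑ n ∈ Icc 1 X, (2 : ℚ) ^ n / n := by ring
      _ ≤ (2 * X + 4) * 2 ^ X := this
      _ = X * ((2 + 4 / X) * 2 ^ X) := by field_simp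
  rw [pow_succ (2 : ℚ) (X / 2)] at hsum
  linarith

lemma le_mul_primeOrbitCount {X : ℕ} (hX : 1 ≤ X) :
    (2 / 3) * 2 ^ X - 4 * X ^ 2 * 2 ^ (X / 2) ≤ X * primeOrbitCount X := by
  have hsum :
      ∑ n ∈ Icc 1 X, fixCount n - X ^ 2 * 2 ^ (X / 2 + 1) ≤ X * primeOrbitCount X := by
    calc ∑ n ∈ Icc 1 X, fixCount n - X ^ 2 * 2 ^ (X / 2 + 1)
        = ∑ n ∈ Icc 1 X, (fixCount n - X * 2 ^ (X / 2 + 1)) := by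
          simp only [sum_sub_distrib, sum_const, Nat.card_Icc, add_tsub_cancel_right,
            nsmul_eq_mul, sub_right_inj]
          ring
      _ ≤ ∑ n ∈ Icc 1 X, X * orbitCount n :=
        sum_le_sum fun n hn => fixCount_sub_le_mul_orbitCount hn
      _ = X * primeOrbitCount X := (mul_sum _ _ _).symm
  have hX1 : (1 : ℚ) ≤ X := by exact_mod_cast hX
  have hP : (1 : ℚ) ≤ 2 ^ (X / 2) := one_le_pow₀ one_le_two
  have hsmall : 2 / 3 + (X : ℚ) ≤ 2 * X ^ 2 * 2 ^ (X / 2) := by nlinarith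
  have := le_sum_fixCount X
  rw [pow_succ (2 : ℚ) (X / 2)] at hsum
  linarith

lemma mul_primeOrbitCount_div_le {X : ℕ} (hX : 6 ≤ X) :
    (X : ℝ) * (primeOrbitCount X : ℝ) / 2 ^ (X + 1) ≤
      1 + 2 / X + X ^ 2 * 2 ^ (X / 2) / 2 ^ X := by
  have h := (Rat.cast_le (K := ℝ)).2 (mul_primeOrbitCount_le hX)
  push_cast at h
  rw [div_le_iff₀ (by positivity)]
  refine h.trans_eq ?_
  field_simp
  ring

lemma le_mul_primeOrbitCount_div {X : ℕ} (hX : 1 ≤ X) :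
    1 / 3 - 2 * (X ^ 2 * 2 ^ (X / 2) / 2 ^ X) ≤
      (X : ℝ) * (primeOrbitCount X : ℝ) / 2 ^ (X + 1) := by
  have h := (Rat.cast_le (K := ℝ)).2 (le_mul_primeOrbitCount hX)
  push_cast at h
  rw [le_div_iff₀ (by positivity)]
  refine le_trans (le_of_eq ?_) h
  field_simp
  ring

theorem pi_f_limsup_liminf :
    Filter.limsup
      (fun X : ℕ =>
        (X : ℝ) * ((∑ n ∈ Finset.Icc 1 X, (1 / (n : ℚ)) * ∑ d ∈ n.divisors,
            (ArithmeticFunction.moebius (n / d) : ℚ) *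
              (((2 : ℚ) ^ d - 1) * padicNorm 3 ((2 : ℚ) ^ d - 1)) : ℚ) : ℝ) /
          (2 : ℝ) ^ (X + 1))
      Filter.atTop ≤ 1 ∧
    (1 / 3 : ℝ) ≤ Filter.liminf
      (fun X : ℕ =>
        (X : ℝ) * ((∑ n ∈ Finset.Icc 1 X, (1 / (n : ℚ)) * ∑ d ∈ n.divisors,
            (ArithmeticFunction.moebius (n / d) : ℚ) *
              (((2 : ℚ) ^ d - 1) * padicNorm 3 ((2 : ℚ) ^ d - 1)) : ℚ) : ℝ) /
          (2 : ℝ) ^ (X + 1))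
      Filter.atTop := by
  have hr := tendsto_sq_mul_two_pow_half_div_two_pow
  refine limsup_le_and_le_liminf_of_squeeze
    (w := fun X : ℕ => 1 / 3 - 2 * ((X : ℝ) ^ 2 * 2 ^ (X / 2) / 2 ^ X))
    (v := fun X : ℕ => 1 + 2 / X + (X : ℝ) ^ 2 * 2 ^ (X / 2) / 2 ^ X) ?_ ?_ ?_ ?_
  · simpa using tendsto_const_nhds.sub (hr.const_mul 2)
  · simpa using (tendsto_const_nhds.add (tendsto_const_div_atTop_nhds_zero_nat 2)).add hr
  · filter_upwards [eventually_ge_atTop 1] with X hX using le_mul_primeOrbitCount_div hX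
  · filter_upwards [eventually_ge_atTop 6] with X hX using mul_primeOrbitCount_div_le hX
end
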